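/- Let n_port ≥ 1 and m_port ≥ 1 be natural numbers, let m_CS be a natural number with m_CS ≥ m_port + (n_port − 1), let E be a nonempty finite set with |E| ≤ n_port, and let r_i be real module requests with 0 < r_i ≤ m_port for i ∈ E, with utilities u_i(x) = min(x / r_i, 1) for x ≥ 0 and u_i(x) = 0 for x < 0. Let m : E → ℕ be an allocation satisfying: (a) m_i ≤ ⌈r_i⌉ for all i ∈ E; (b) ∑_{i∈E} m_i = min(m_CS, ∑_{i∈E} ⌈r_i⌉); (c) there exists a natural number T such that every i ∈ E has either m_i = ⌈r_i⌉ ≤ T, or m_i < ⌈r_i⌉ and T − 1 ≤ m_i ≤ T; and (d) every i ∈ E with m_i < ⌈r_i⌉ satisfies m_i ≥ ⌊m_CS / |E|⌋. Then m is a fair allocation for the modular station: it is feasible (m_i ≤ m_port and ∑_{i∈E} m_i ≤ m_CS), envy-free up to one module, Pareto efficient among feasible integer allocations, and proportional. -/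

import Mathlib

/-!
An EV whose request is met has utility 1 and envies no one; by (c), an EV whose request is not
met holds at least `T - 1` modules while everybody holds at most `T`, which gives EF1. An
allocation that makes nobody worse off must give every EV at least as many modules, because
utility is strictly increasing below the request; by (b) either every request is already met or
the whole station is already in use, so nobody can gain, which is Pareto efficiency.
Proportionality follows from `r i ≤ |E| * m i`: for an unmet request, (d) and the capacity
assumption give `m_port ≤ |E| * ⌊m_CS / |E|⌋ ≤ |E| * m i`.
-/

open Finset

noncomputable def cappedUtility (r x : ℝ) : ℝ :=
  if 0 ≤ x then min (x / r) 1 else 0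

section CappedUtility

variable {r x y : ℝ}

lemma cappedUtility_le_one : cappedUtility r x ≤ 1 := by
  unfold cappedUtility
  split_ifs
  · exact min_le_right _ _
  · exact zero_le_one

lemma cappedUtility_monotone (hr : 0 ≤ r) : Monotone (cappedUtility r) := by
  intro x y hxy
  unfold cappedUtility
  split_ifs with hx hy hy
  · gcongr
  · exact absurd (hx.trans hxy) hy
  · exact le_min (div_nonneg hy hr) zero_le_one
  · exact le_rfl

lemma cappedUtility_of_le (hr : 0 < r) (h : r ≤ x) : cappedUtility r x = 1 := by
  rw [cappedUtility, if_pos (hr.le.trans h), min_eq_right ((one_le_div hr).mpr h)]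

lemma cappedUtility_lt_cappedUtility (hr : 0 < r) (hx : 0 ≤ x) (hxr : x < r) (hxy : x < y) :
    cappedUtility r x < cappedUtility r y := by
  have hxr' : x / r < 1 := (div_lt_one hr).mpr hxr
  rw [cappedUtility, if_pos hx, min_eq_left hxr'.le, cappedUtility, if_pos (hx.trans hxy.le)]
  exact lt_min (by gcongr) hxr'

lemma cappedUtility_div_le {c : ℝ} (hr : 0 < r) (hc : 1 ≤ c) (h : r ≤ c * x) :
    cappedUtility r y / c ≤ cappedUtility r x := by
  have hc0 : 0 < c := zero_lt_one.trans_le hc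
  have hx : 0 ≤ x := nonneg_of_mul_nonneg_right (hr.le.trans h) hc0
  calc cappedUtility r y / c ≤ 1 / c := by gcongr; exact cappedUtility_le_one
    _ ≤ cappedUtility r x := by
      rw [cappedUtility, if_pos hx]
      refine le_min ?_ ((div_le_one hc0).mpr hc)
      rw [div_le_div_iff₀ hc0 hr]
      linarith

lemma cappedUtility_natCast_sub_one_le (hr : 0 < r) {a b : ℕ} (h : a = ⌈r⌉₊ ∨ b ≤ a + 1) :
    cappedUtility r ((b : ℝ) - 1) ≤ cappedUtility r a := by
  rcases h with rfl | hba
  · rw [cappedUtility_of_le hr (Nat.le_ceil r)]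
    exact cappedUtility_le_one
  · apply cappedUtility_monotone hr.le
    have : (b : ℝ) ≤ a + 1 := by exact_mod_cast hba
    linarith

end CappedUtility

lemma le_mul_div_of_add_pred_le {a b n : ℕ} (hn : 0 < n) (h : a + (n - 1) ≤ b) :
    a ≤ n * (b / n) := by
  have := Nat.div_add_mod b n
  have := Nat.mod_lt b hn
  omega

section Allocation

variable {ι : Type*} {E : Finset ι} {r : ι → ℝ} {m : ι → ℕ}

lemma eq_or_le_succ_of_round_robin {c : ι → ℕ} {T : ℕ}
    (hT : ∀ i ∈ E, (m i = c i ∧ m i ≤ T) ∨ (m i < c i ∧ T - 1 ≤ m i ∧ m i ≤ T))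
    {i j : ι} (hi : i ∈ E) (hj : j ∈ E) : m i = c i ∨ m j ≤ m i + 1 := by
  have hjT : m j ≤ T := by rcases hT j hj with ⟨-, h⟩ | ⟨-, -, h⟩ <;> exact h
  rcases hT i hi with ⟨h, -⟩ | ⟨-, h, -⟩
  · exact Or.inl h
  · exact Or.inr (by omega)

lemma cappedUtility_le_of_no_loss {mCS : ℕ} (hr : ∀ i ∈ E, 0 < r i)
    (ha : ∀ i ∈ E, m i ≤ ⌈r i⌉₊) (hb : ∑ i ∈ E, m i = min mCS (∑ i ∈ E, ⌈r i⌉₊))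
    {m' : ι → ℕ} (hsum : ∑ i ∈ E, m' i ≤ mCS)
    (hnoloss : ∀ k ∈ E, cappedUtility (r k) (m k) ≤ cappedUtility (r k) (m' k)) :
    ∀ i ∈ E, cappedUtility (r i) (m' i) ≤ cappedUtility (r i) (m i) := by
  have hle : ∀ k ∈ E, m k ≤ m' k := by
    intro k hk
    by_contra! hlt
    have hm'r : (m' k : ℝ) < r k := Nat.lt_ceil.mp (hlt.trans_le (ha k hk))
    exact (hnoloss k hk).not_gt <| cappedUtility_lt_cappedUtility (hr k hk) (Nat.cast_nonneg _)
      hm'r (by exact_mod_cast hlt)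
  intro i hi
  rcases le_total (∑ k ∈ E, ⌈r k⌉₊) mCS with hfit | hfull
  · have hceil : ∀ k ∈ E, m k = ⌈r k⌉₊ :=
      (sum_eq_sum_iff_of_le ha).mp (by rw [hb, min_eq_right hfit])
    rw [hceil i hi, cappedUtility_of_le (hr i hi) (Nat.le_ceil _)]
    exact cappedUtility_le_one
  · have hsame : ∀ k ∈ E, m k = m' k :=
      (sum_eq_sum_iff_of_le hle).mp <| le_antisymm (sum_le_sum hle)
        (hsum.trans (by rw [hb, min_eq_left hfull]))
    rw [hsame i hi]

lemma le_card_mul_of_floor_share {mport mCS : ℕ} (hcap : mport + (E.card - 1) ≤ mCS)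
    (hr : ∀ i ∈ E, r i ≤ mport) (ha : ∀ i ∈ E, m i ≤ ⌈r i⌉₊)
    (hd : ∀ i ∈ E, m i < ⌈r i⌉₊ → mCS / E.card ≤ m i) {i : ι} (hi : i ∈ E) :
    r i ≤ E.card * m i := by
  have hcard : 0 < E.card := card_pos.mpr ⟨i, hi⟩
  rcases (ha i hi).eq_or_lt with hmet | hunmet
  · calc r i ≤ m i := hmet ▸ Nat.le_ceil _
      _ ≤ E.card * m i := le_mul_of_one_le_left (Nat.cast_nonneg _) (by exact_mod_cast hcard)
  · have : mport ≤ E.card * m i :=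
      (le_mul_div_of_add_pred_le hcard hcap).trans (Nat.mul_le_mul_left _ (hd i hi hunmet))
    calc r i ≤ mport := hr i hi
      _ ≤ E.card * m i := by exact_mod_cast this

end Allocation

theorem fair_opap_m_output_fair_general {ι : Type*}
    (nport mport : ℕ)
    (mCS : ℕ) (hcap : mport + (nport - 1) ≤ mCS)
    (E : Finset ι) (hEcard : E.card ≤ nport)
    (r : ι → ℝ) (hr : ∀ i ∈ E, 0 < r i ∧ r i ≤ (mport : ℝ))
    (u : ι → ℝ → ℝ)
    (hu : ∀ i, ∀ x : ℝ, u i x = if 0 ≤ x then min (x / r i) 1 else 0)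
    (m : ι → ℕ)
    -- (a) nobody gets more than their rounded request
    (ha : ∀ i ∈ E, m i ≤ ⌈r i⌉₊)
    -- (b) the allocation exhausts the available modules
    (hb : ∑ i ∈ E, m i = min mCS (∑ i ∈ E, ⌈r i⌉₊))
    -- (c) round-robin structure
    (hc : ∃ T : ℕ, ∀ i ∈ E,
      (m i = ⌈r i⌉₊ ∧ m i ≤ T) ∨
      (m i < ⌈r i⌉₊ ∧ T - 1 ≤ m i ∧ m i ≤ T))
    -- (d) unfulfilled EVs receive at least the floor share
    (hd : ∀ i ∈ E, m i < ⌈r i⌉₊ → mCS / E.card ≤ m i) :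
    -- feasibility
    ((∀ i ∈ E, m i ≤ mport) ∧ ∑ i ∈ E, m i ≤ mCS) ∧
    -- EF1
    (∀ i ∈ E, ∀ j ∈ E, u i (m i : ℝ) ≥ u i ((m j : ℝ) - 1)) ∧
    -- Pareto efficiency among feasible integer allocations
    (∀ m' : ι → ℕ, (∀ i ∈ E, m' i ≤ mport) → (∑ i ∈ E, m' i ≤ mCS) →
      (∃ i ∈ E, u i (m' i : ℝ) > u i (m i : ℝ)) →
      ∃ k ∈ E, u k (m' k : ℝ) < u k (m k : ℝ)) ∧
    -- proportionality
    (∀ i ∈ E, u i (m i : ℝ) ≥ u i (mCS : ℝ) / (E.card : ℝ)) := by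
  obtain rfl : u = fun i => cappedUtility (r i) := funext₂ hu
  obtain ⟨T, hT⟩ := hc
  have hr0 : ∀ i ∈ E, 0 < r i := fun i hi => (hr i hi).1
  refine ⟨⟨fun i hi => (ha i hi).trans (Nat.ceil_le.mpr (hr i hi).2), hb ▸ min_le_left _ _⟩,
    ?_, ?_, ?_⟩
  · intro i hi j hj
    exact cappedUtility_natCast_sub_one_le (hr0 i hi) (eq_or_le_succ_of_round_robin hT hi hj)
  · rintro m' - hsum ⟨i, hi, hgain⟩
    by_contra! hnoloss
    exact (cappedUtility_le_of_no_loss hr0 ha hb hsum hnoloss i hi).not_gt hgain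
  · intro i hi
    have hcard : (1 : ℝ) ≤ E.card := by exact_mod_cast card_pos.mpr ⟨i, hi⟩
    exact cappedUtility_div_le (hr0 i hi) hcard
      (le_card_mul_of_floor_share (by omega) (fun j hj => (hr j hj).2) ha hd hi)

/-- Any integer allocation satisfying the structural properties
(a)–(d) of the output of Fair-Opap-M is a fair allocation for the modular
station: feasible, EF1, Pareto efficient, and proportional. -/
theorem fair_opap_m_output_fair {ι : Type*}
    (nport mport : ℕ) (hnport : 1 ≤ nport) (hmport : 1 ≤ mport)
    (mCS : ℕ) (hcap : mport + (nport - 1) ≤ mCS)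
    (E : Finset ι) (hE : E.Nonempty) (hEcard : E.card ≤ nport)
    (r : ι → ℝ) (hr : ∀ i ∈ E, 0 < r i ∧ r i ≤ (mport : ℝ))
    (u : ι → ℝ → ℝ)
    (hu : ∀ i, ∀ x : ℝ, u i x = if 0 ≤ x then min (x / r i) 1 else 0)
    (m : ι → ℕ)
    -- (a) nobody gets more than their rounded request
    (ha : ∀ i ∈ E, m i ≤ ⌈r i⌉₊)
    -- (b) the allocation exhausts the available modules
    (hb : ∑ i ∈ E, m i = min mCS (∑ i ∈ E, ⌈r i⌉₊))
    -- (c) round-robin structure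
    (hc : ∃ T : ℕ, ∀ i ∈ E,
      (m i = ⌈r i⌉₊ ∧ m i ≤ T) ∨
      (m i < ⌈r i⌉₊ ∧ T - 1 ≤ m i ∧ m i ≤ T))
    -- (d) unfulfilled EVs receive at least the floor share
    (hd : ∀ i ∈ E, m i < ⌈r i⌉₊ → mCS / E.card ≤ m i) :
    -- feasibility
    ((∀ i ∈ E, m i ≤ mport) ∧ ∑ i ∈ E, m i ≤ mCS) ∧
    -- EF1
    (∀ i ∈ E, ∀ j ∈ E, u i (m i : ℝ) ≥ u i ((m j : ℝ) - 1)) ∧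
    -- Pareto efficiency among feasible integer allocations
    (∀ m' : ι → ℕ, (∀ i ∈ E, m' i ≤ mport) → (∑ i ∈ E, m' i ≤ mCS) →
      (∃ i ∈ E, u i (m' i : ℝ) > u i (m i : ℝ)) →
      ∃ k ∈ E, u k (m' k : ℝ) < u k (m k : ℝ)) ∧
    -- proportionality
    (∀ i ∈ E, u i (m i : ℝ) ≥ u i (mCS : ℝ) / (E.card : ℝ)) :=
  fair_opap_m_output_fair_general nport mport mCS hcap E hEcard r hr u hu m ha hb hc hd
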